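/- arXiv:2604.19698 — 2 statements merged into one kernel-verified Lean document; each statement's English description precedes it below -/
import Mathlib

section
/- Let (X, B, μ) be a measure space and let φ_0,…,φ_{N-1} and ψ_0,…,ψ_{N-1} be measurable functions such that φ_k ψ_ℓ ∈ L¹(μ) for all k, ℓ. Then det( (∫ φ_k ψ_ℓ dμ)_{k,ℓ=0}^{N-1} ) = (1/N!) ∫_{X^N} det(Φ(x_{1:N})) det(Ψ(x_{1:N})) dμ^{⊗N}(x), where Φ(x_{1:N}) is the N×N matrix with entries φ_ℓ(x_n) and Ψ(x_{1:N}) the matrix with entries ψ_ℓ(x_n). -/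
/-!
Expanding both determinants over permutations and integrating term by term, Fubini turns
`∫ ∏ₙ φ_{σ n}(xₙ) ψ_{τ n}(xₙ)` into `∏ₙ A_{σ n, τ n}` with `A_{kl} = ∫ φₖ ψₗ dμ`. For fixed `τ`
the signed sum over `σ` is `sign τ · det A`, so the double sum is `N! · det A`.

Fubini needs `μ` to be σ-finite. An integrable function vanishes outside a measurable set on
which `μ` is σ-finite; restricting `μ` to such a set `S` for all the `φₖ ψₗ` at once changes
neither side, because the integrand on `X^N` vanishes off `S^N`.
-/

open MeasureTheory Matrix BigOperators

open Equiv

namespace Matrix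

variable {n R : Type*} [Fintype n] [DecidableEq n] [CommRing R]

theorem det_of_mul_det_of (a b : n → n → R) :
    det (of a) * det (of b) =
      ∑ σ : Perm n, ∑ τ : Perm n,
        ((Perm.sign σ : ℤ) : R) * (Perm.sign τ : ℤ) * ∏ i, a i (σ i) * b i (τ i) := by
  rw [← det_transpose, det_apply', ← det_transpose (of b), det_apply', Finset.sum_mul_sum]
  refine Fintype.sum_congr _ _ fun σ => Fintype.sum_congr _ _ fun τ => ?_
  simp only [transpose_apply, of_apply, Finset.prod_mul_distrib]
  ring

theorem sum_perm_sign_mul_prod_apply_perm (A : Matrix n n R) (τ : Perm n) :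
    ∑ σ : Perm n, ((Perm.sign σ : ℤ) : R) * ∏ i, A (σ i) (τ i) = (Perm.sign τ : ℤ) * det A := by
  rw [← det_permute', det_apply']
  rfl

theorem sum_perm_sum_perm_sign_mul_prod (A : Matrix n n R) :
    ∑ σ : Perm n, ∑ τ : Perm n,
        ((Perm.sign σ : ℤ) : R) * (Perm.sign τ : ℤ) * ∏ i, A (σ i) (τ i)
      = (Fintype.card n).factorial * det A := by
  have hsign : ∀ τ : Perm n, ((Perm.sign τ : ℤ) : R) * (Perm.sign τ : ℤ) = 1 := fun τ => by
    rw [← Int.cast_mul, ← Units.val_mul, Int.units_mul_self, Units.val_one, Int.cast_one]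
  calc _ = ∑ τ : Perm n, ((Perm.sign τ : ℤ) : R) *
          ∑ σ : Perm n, ((Perm.sign σ : ℤ) : R) * ∏ i, A (σ i) (τ i) := by
        rw [Finset.sum_comm]
        simp only [Finset.mul_sum]
        refine Fintype.sum_congr _ _ fun τ => Fintype.sum_congr _ _ fun σ => by ring
    _ = ∑ _τ : Perm n, det A := by
        simp only [sum_perm_sign_mul_prod_apply_perm, ← mul_assoc, hsign, one_mul]
    _ = (Fintype.card n).factorial * det A := by
        simp [Fintype.card_perm]

theorem det_mul_det_eq_zero_of_row_mul_eq_zero [NoZeroDivisors R] {M P : Matrix n n R} (i : n)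
    (h : ∀ k l, M i k * P i l = 0) : det M * det P = 0 := by
  by_cases hM : ∀ k, M i k = 0
  · rw [det_eq_zero_of_row_eq_zero i hM, zero_mul]
  · obtain ⟨k, hk⟩ := not_forall.1 hM
    rw [det_eq_zero_of_row_eq_zero i fun l => (mul_eq_zero.1 (h k l)).resolve_left hk, mul_zero]

end Matrix

namespace MeasureTheory

namespace Measure

variable {ι : Type*} [Fintype ι] {α : ι → Type*} [∀ i, MeasurableSpace (α i)]

theorem pi_mono {μ ν : ∀ i, Measure (α i)} (h : ∀ i, μ i ≤ ν i) :
    Measure.pi μ ≤ Measure.pi ν := by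
  refine Measure.le_iff.2 fun A hA => ?_
  rw [Measure.pi_def, Measure.pi_def, toMeasure_apply _ _ hA, toMeasure_apply _ _ hA]
  refine (OuterMeasure.le_pi.2 fun s _ => ?_) A
  exact (OuterMeasure.pi_pi_le _ s).trans (Finset.prod_le_prod' fun i _ => h i (s i))

theorem pi_pi_le (μ : ∀ i, Measure (α i)) {s : ∀ i, Set (α i)} (hs : ∀ i, MeasurableSet (s i)) :
    Measure.pi μ (Set.univ.pi s) ≤ ∏ i, μ i (s i) := by
  rw [Measure.pi_def, toMeasure_apply _ _ (MeasurableSet.univ_pi hs)]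
  exact OuterMeasure.pi_pi_le _ s

theorem restrict_pi_pi_of_sigmaFinite_restrict (μ : ∀ i, Measure (α i)) {s : ∀ i, Set (α i)}
    (hs : ∀ i, MeasurableSet (s i)) [∀ i, SigmaFinite ((μ i).restrict (s i))] :
    (Measure.pi μ).restrict (Set.univ.pi s) = Measure.pi fun i => (μ i).restrict (s i) := by
  refine (pi_eq fun t ht => ?_).symm
  have hts : ∀ i, MeasurableSet (t i ∩ s i) := fun i => (ht i).inter (hs i)
  simp_rw [restrict_apply (MeasurableSet.univ_pi ht), restrict_apply (ht _),
    ← Set.pi_inter_distrib]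
  refine le_antisymm (pi_pi_le μ hts) ?_
  calc ∏ i, μ i (t i ∩ s i)
        = Measure.pi (fun i => (μ i).restrict (s i)) (Set.univ.pi fun i => t i ∩ s i) := by
        simp_rw [pi_pi, restrict_apply (hts _), Set.inter_assoc, Set.inter_self]
    _ ≤ _ := pi_mono (fun i => restrict_le_self) _

end Measure

variable {X E : Type*} [MeasurableSpace X] [NormedAddCommGroup E]

theorem Integrable.exists_sigmaFinite_restrict {μ : Measure X} {f : X → E}
    (hf : Integrable f μ) (hfm : StronglyMeasurable f) :
    ∃ t, MeasurableSet t ∧ (∀ x ∈ tᶜ, f x = 0) ∧ SigmaFinite (μ.restrict t) :=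
  ((memLp_one_iff_integrable.2 hf).finStronglyMeasurable_of_stronglyMeasurable hfm one_ne_zero
    ENNReal.one_ne_top).exists_set_sigmaFinite

theorem integral_pi_eq_integral_pi_restrict [NormedSpace ℝ E] {ι : Type*} [Fintype ι]
    (μ : Measure X) {S : Set X} (hS : MeasurableSet S) [SigmaFinite (μ.restrict S)]
    {F : (ι → X) → E} (hF : ∀ x, ∀ i, x i ∉ S → F x = 0) :
    ∫ x, F x ∂(Measure.pi fun _ => μ) = ∫ x, F x ∂(Measure.pi fun _ => μ.restrict S) := by
  rw [← Measure.restrict_pi_pi_of_sigmaFinite_restrict _ fun _ => hS]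
  refine (setIntegral_eq_integral_of_forall_compl_eq_zero fun x hx => ?_).symm
  obtain ⟨i, hi⟩ := not_forall.1 (Set.mem_univ_pi.not.1 hx)
  exact hF x i hi

end MeasureTheory

theorem integral_det_mul_det_eq_factorial_mul_det {X 𝕜 ι : Type*} [MeasurableSpace X] [RCLike 𝕜]
    [Fintype ι] [DecidableEq ι] (μ : Measure X) [SigmaFinite μ] (φ ψ : ι → X → 𝕜)
    (hint : ∀ k l, Integrable (fun x => φ k x * ψ l x) μ) :
    ∫ x : ι → X, det (of fun n k => φ k (x n)) * det (of fun n k => ψ k (x n))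
        ∂(Measure.pi fun _ => μ)
      = (Fintype.card ι).factorial * det (of fun k l => ∫ x, φ k x * ψ l x ∂μ) := by
  have hprod : ∀ σ τ : Perm ι,
      Integrable (fun x : ι → X => ∏ n, φ (σ n) (x n) * ψ (τ n) (x n)) (Measure.pi fun _ => μ) :=
    fun σ τ => Integrable.fintype_prod (f := fun n y => φ (σ n) y * ψ (τ n) y) fun n => hint _ _
  simp_rw [det_of_mul_det_of]
  rw [integral_finsetSum _ fun σ _ => integrable_finsetSum _ fun τ _ => (hprod σ τ).const_mul _,
    ← sum_perm_sum_perm_sign_mul_prod]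
  refine Fintype.sum_congr _ _ fun σ => ?_
  rw [integral_finsetSum _ fun τ _ => (hprod σ τ).const_mul _]
  refine Fintype.sum_congr _ _ fun τ => ?_
  rw [integral_const_mul,
    integral_fintype_prod_eq_prod (f := fun n y => φ (σ n) y * ψ (τ n) y)]
  rfl

/-- Generalized Cauchy–Binet (Andréief) identity. -/
theorem andreief_identity
    {X : Type*} [MeasurableSpace X] (μ : Measure X) (N : ℕ)
    (φ ψ : Fin N → X → ℝ)
    (hφ : ∀ k, Measurable (φ k)) (hψ : ∀ k, Measurable (ψ k))
    (hint : ∀ k l, Integrable (fun x => φ k x * ψ l x) μ) :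
    Matrix.det (Matrix.of fun k l : Fin N => ∫ x, φ k x * ψ l x ∂μ)
      = (Nat.factorial N : ℝ)⁻¹ *
        ∫ x : Fin N → X,
          Matrix.det (Matrix.of fun n k : Fin N => φ k (x n)) *
          Matrix.det (Matrix.of fun n k : Fin N => ψ k (x n))
          ∂(Measure.pi fun _ => μ) := by
  obtain ⟨S, hS, hS_compl, hS_sf⟩ := Integrable.exists_sigmaFinite_restrict
    (f := fun x (k l : Fin N) => φ k x * ψ l x)
    (integrable_pi_iff.2 fun k => integrable_pi_iff.2 fun l => hint k l)
    (measurable_pi_lambda _ fun k => measurable_pi_lambda _ fun l =>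
      (hφ k).mul (hψ l)).stronglyMeasurable
  have hvanish : ∀ x ∉ S, ∀ k l, φ k x * ψ l x = 0 := fun x hx k l =>
    congr_fun (congr_fun (hS_compl x hx) k) l
  have hentries : (of fun k l : Fin N => ∫ x, φ k x * ψ l x ∂μ)
      = of fun k l => ∫ x, φ k x * ψ l x ∂μ.restrict S := by
    ext k l
    exact (setIntegral_eq_integral_of_forall_compl_eq_zero fun x hx => hvanish x hx k l).symm
  rw [hentries, integral_pi_eq_integral_pi_restrict μ hS fun x n hn =>
      det_mul_det_eq_zero_of_row_mul_eq_zero n (hvanish (x n) hn),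
    integral_det_mul_det_eq_factorial_mul_det _ _ _ fun k l => (hint k l).restrict,
    Fintype.card_fin,
    inv_mul_cancel_left₀ (Nat.cast_ne_zero.2 N.factorial_ne_zero)]
end

section
/- Let μ be a finite measure on X with μ(X) > 0, let φ_0 = μ(X)^{-1/2} (constant) and φ_0,…,φ_{N-1} be orthonormal in L²(μ). If f ∈ L²(μ) lies in span{φ_0,…,φ_{N-1}}, then for μ^{⊗N}-almost every sample (x_1,…,x_N) of the projection DPP, the EZ estimator is exact: μ(X)^{1/2} det Φ_{φ_0,f}(x_{1:N}) / det Φ(x_{1:N}) = ∫_X f dμ. -/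
/-!
Almost surely the sample matrix `Φ(x)` is invertible, because the DPP density `det Φ(x)² / N!`
vanishes wherever it is singular. Evaluating `f = ∑ ⟨f, φₖ⟩ φₖ` at the sample points writes the
column `f(x)` as `Φ(x) c`, so by multilinearity replacing the first column of `Φ(x)` by `f(x)`
multiplies the determinant by `c₀ = ⟨f, φ₀⟩ = μ(X)^{-1/2} ∫ f dμ`.
-/

open MeasureTheory Matrix
open scoped ENNReal

/- Unlike `setLIntegral_eq_zero`, `s` need not be measurable: a simple function below `f` has
measurable support, disjoint from `s`. -/
theorem MeasureTheory.setLIntegral_eq_zero_of_eqOn {α : Type*} [MeasurableSpace α]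
    {μ : Measure α} {f : α → ℝ≥0∞} {s : Set α} (hf : Set.EqOn f 0 s) :
    ∫⁻ x in s, f x ∂μ = 0 := by
  rw [lintegral]
  refine nonpos_iff_eq_zero.mp (iSup₂_le fun g hg => ?_)
  have hdisj : Function.support g ∩ s = ∅ := Set.eq_empty_of_forall_notMem fun x ⟨hgx, hx⟩ =>
    hgx (le_antisymm ((hg x).trans (hf hx).le) bot_le)
  have hnull : g =ᵐ[μ.restrict s] 0 := by
    rw [Filter.EventuallyEq, ae_iff]
    exact (Measure.restrict_apply g.measurableSet_support).trans (by rw [hdisj, measure_empty])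
  rw [← SimpleFunc.lintegral_eq_lintegral, lintegral_congr_ae hnull]
  simp

theorem MeasureTheory.ae_withDensity_ne_zero {α : Type*} [MeasurableSpace α]
    {μ : Measure α} [SFinite μ] (f : α → ℝ≥0∞) : ∀ᵐ x ∂μ.withDensity f, f x ≠ 0 := by
  rw [ae_iff, withDensity_apply']
  exact setLIntegral_eq_zero_of_eqOn fun x hx => by simpa using hx

theorem Matrix.det_updateCol_mulVec {n R : Type*} [Fintype n] [DecidableEq n] [CommRing R]
    (A : Matrix n n R) (j : n) (c : n → R) : (A.updateCol j (A *ᵥ c)).det = c j * A.det := by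
  have hcol : A *ᵥ c = fun k => ∑ i, c i • A k i := by
    ext k
    simp [mulVec, dotProduct, mul_comm]
  rw [hcol, det_updateCol_sum, smul_eq_mul]

theorem ez_estimator_exact_in_span_general
    {X : Type*} [MeasurableSpace X] (μ : Measure X) [IsFiniteMeasure μ]
    (hμ : 0 < (μ Set.univ).toReal) (N : ℕ) (hN : 0 < N)
    (φ : Fin N → X → ℝ) (f : X → ℝ)
    (hφ0 : ∀ t, φ ⟨0, hN⟩ t = (Real.sqrt (μ Set.univ).toReal)⁻¹)
    (hspan : f =ᵐ[μ] fun t => ∑ k, (∫ s, f s * φ k s ∂μ) * φ k t)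
    (P : Measure (Fin N → X))
    (hP : P = (Measure.pi fun _ : Fin N => μ).withDensity
      (fun x => ENNReal.ofReal ((Nat.factorial N : ℝ)⁻¹ *
        (Matrix.det (Matrix.of fun n l : Fin N => φ l (x n))) ^ 2))) :
    ∀ᵐ x ∂P,
      Real.sqrt (μ Set.univ).toReal *
        (Matrix.det ((Matrix.of fun n l : Fin N => φ l (x n)).updateCol ⟨0, hN⟩
            (fun n => f (x n)))
          / Matrix.det (Matrix.of fun n l : Fin N => φ l (x n)))
      = ∫ t, f t ∂μ := by
  set Φ : (Fin N → X) → Matrix (Fin N) (Fin N) ℝ := fun x => Matrix.of fun n l => φ l (x n)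
  set c : Fin N → ℝ := fun k => ∫ s, f s * φ k s ∂μ
  have hdet : ∀ᵐ x ∂P, (Φ x).det ≠ 0 := by
    subst hP
    filter_upwards [ae_withDensity_ne_zero _] with x hx hzero
    simp [Φ, hzero] at hx
  have hsample : ∀ᵐ x ∂P, (fun n => f (x n)) = Φ x *ᵥ c := by
    have hπ : ∀ᵐ x ∂Measure.pi fun _ : Fin N => μ, ∀ n, f (x n) = ∑ k, c k * φ k (x n) :=
      Filter.eventually_all.2 fun n =>
        (Measure.tendsto_eval_ae_ae (μ := fun _ => μ) (i := n)).eventually hspan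
    filter_upwards [hP ▸ withDensity_absolutelyContinuous _ _ |>.ae_le hπ] with x hx
    ext n
    simp [hx n, Φ, mulVec, dotProduct, mul_comm]
  have hc0 : c ⟨0, hN⟩ = (Real.sqrt (μ Set.univ).toReal)⁻¹ * ∫ t, f t ∂μ := by
    simp only [c, hφ0, integral_mul_const, mul_comm]
  have hsqrt : Real.sqrt (μ Set.univ).toReal ≠ 0 := (Real.sqrt_pos.mpr hμ).ne'
  filter_upwards [hdet, hsample] with x hx hfx
  rw [hfx, det_updateCol_mulVec, hc0, mul_div_cancel_right₀ _ hx,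
    mul_inv_cancel_left₀ hsqrt]

/-- If `f` lies in the span of the orthonormal functions (with `φ₀` constant),
the EZ estimator is almost surely exact for `∫ f dμ` under the projection DPP. -/
theorem ez_estimator_exact_in_span
    {X : Type*} [MeasurableSpace X] (μ : Measure X) [IsFiniteMeasure μ]
    (hμ : 0 < (μ Set.univ).toReal) (N : ℕ) (hN : 0 < N)
    (φ : Fin N → X → ℝ) (f : X → ℝ)
    (hf : MemLp f 2 μ) (hφ : ∀ k, MemLp (φ k) 2 μ)
    (horth : ∀ k l, ∫ x, φ k x * φ l x ∂μ = if k = l then (1 : ℝ) else 0)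
    (hφ0 : ∀ t, φ ⟨0, hN⟩ t = (Real.sqrt (μ Set.univ).toReal)⁻¹)
    (hspan : f =ᵐ[μ] fun t => ∑ k, (∫ s, f s * φ k s ∂μ) * φ k t)
    (P : Measure (Fin N → X))
    (hP : P = (Measure.pi fun _ : Fin N => μ).withDensity
      (fun x => ENNReal.ofReal ((Nat.factorial N : ℝ)⁻¹ *
        (Matrix.det (Matrix.of fun n l : Fin N => φ l (x n))) ^ 2))) :
    ∀ᵐ x ∂P,
      Real.sqrt (μ Set.univ).toReal *
        (Matrix.det ((Matrix.of fun n l : Fin N => φ l (x n)).updateCol ⟨0, hN⟩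
            (fun n => f (x n)))
          / Matrix.det (Matrix.of fun n l : Fin N => φ l (x n)))
      = ∫ t, f t ∂μ :=
  ez_estimator_exact_in_span_general μ hμ N hN φ f hφ0 hspan P hP
end
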